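/- arXiv:2506.23048 — 5 statements merged into one kernel-verified Lean document; each statement's English description precedes it below -/
import Mathlib

section
/- Let A be a group, N a normal subgroup of A, G a subgroup of A with N ≤ G, and H a subgroup of A with H ≤ G, H ≠ G, N ≰ H, such that H is maximal in G (that is, for every subgroup K of A with H ≤ K ≤ G, either K = H or K = G). Set H₀ = H ∩ N, H₁ = N_A(H₀) (the normalizer of H₀ in A), and G₁ = N ⊔ H₁. Then for every subgroup M of A with H₁ ≤ M ≤ G₁ and M ≠ G₁, one has M = H₁; in other words, there is no subgroup M with H₁ < M < G₁. -/
/-- If `H` normalizes `P`, then every element of `H ⊔ P` is a product `h * p`. -/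
lemma aux_sup_eq_mul {A : Type*} [Group A] (H P : Subgroup A) (hn : H ≤ Subgroup.normalizer (P : Set A)) :
    ∀ g ∈ H ⊔ P, ∃ h ∈ H, ∃ p ∈ P, g = h * p := by
  have key : ∀ (h : A), h ∈ Subgroup.normalizer (P : Set A) → ∀ p ∈ P, h * p * h⁻¹ ∈ P := by
    intro h hh p hp
    exact (Subgroup.mem_normalizer_iff.mp hh p).mp hp
  let S : Subgroup A :=
    { carrier := {g | ∃ h ∈ H, ∃ p ∈ P, g = h * p}
      one_mem' := ⟨1, H.one_mem, 1, P.one_mem, by simp⟩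
      mul_mem' := by
        rintro a b ⟨h1, hh1, p1, hp1, rfl⟩ ⟨h2, hh2, p2, hp2, rfl⟩
        refine ⟨h1 * h2, H.mul_mem hh1 hh2, (h2⁻¹ * p1 * h2) * p2,
          P.mul_mem ?_ hp2, by group⟩
        simpa using key h2⁻¹ ((Subgroup.normalizer (P : Set A)).inv_mem (hn hh2)) p1 hp1
      inv_mem' := by
        rintro a ⟨h, hh, p, hp, rfl⟩
        refine ⟨h⁻¹, H.inv_mem hh, h * p⁻¹ * h⁻¹, key h (hn hh) p⁻¹ (P.inv_mem hp), by group⟩ }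
  intro g hg
  have hsub : H ⊔ P ≤ S := by
    refine sup_le ?_ ?_
    · intro x hx; exact ⟨x, hx, 1, P.one_mem, by simp⟩
    · intro x hx; exact ⟨1, H.one_mem, x, hx, by simp⟩
  exact hsub hg

/-- Lemma 3.2: with `H₀ = H ⊓ N`, `H₁ = N_A(H₀)`, `G₁ = N ⊔ H₁`, the subgroup `H₁` is
maximal in `G₁`: there is no subgroup strictly between `H₁` and `G₁`. -/
theorem stmt1 {A : Type*} [Group A] (N G H : Subgroup A) [N.Normal]
    (hNG : N ≤ G) (hHG : H ≤ G) (hne : H ≠ G) (hNH : ¬ N ≤ H)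
    (hmax : ∀ K : Subgroup A, H ≤ K → K ≤ G → K = H ∨ K = G) :
    ∀ M : Subgroup A, Subgroup.normalizer ((H ⊓ N : Subgroup A) : Set A) ≤ M → M ≤ N ⊔ Subgroup.normalizer ((H ⊓ N : Subgroup A) : Set A) →
      M ≠ N ⊔ Subgroup.normalizer ((H ⊓ N : Subgroup A) : Set A) → M = Subgroup.normalizer ((H ⊓ N : Subgroup A) : Set A) := by
  intro M hH₁M hMG₁ hMne
  set H₀ := H ⊓ N with hH₀
  -- H normalizes H₀ = H ⊓ N since N is normal
  have hHnorm : H ≤ Subgroup.normalizer (H₀ : Set A) := by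
    intro h hh
    rw [Subgroup.mem_normalizer_iff]
    intro x
    constructor
    · rintro ⟨hx1, hx2⟩
      exact ⟨H.mul_mem (H.mul_mem hh hx1) (H.inv_mem hh),
        Subgroup.Normal.conj_mem ‹N.Normal› x hx2 h⟩
    · rintro ⟨hx1, hx2⟩
      have h1 : x = h⁻¹ * (h * x * h⁻¹) * h⁻¹⁻¹ := by group
      constructor
      · have := H.mul_mem (H.mul_mem (H.inv_mem hh) hx1) hh
        simpa [mul_assoc] using this
      · rw [h1]; exact Subgroup.Normal.conj_mem ‹N.Normal› _ hx2 h⁻¹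
  -- every element of M normalizes M ⊓ N
  have hMnorm : M ≤ Subgroup.normalizer ((M ⊓ N : Subgroup A) : Set A) := by
    intro m hm
    rw [Subgroup.mem_normalizer_iff]
    intro x
    constructor
    · rintro ⟨hx1, hx2⟩
      exact ⟨M.mul_mem (M.mul_mem hm hx1) (M.inv_mem hm),
        Subgroup.Normal.conj_mem ‹N.Normal› x hx2 m⟩
    · rintro ⟨hx1, hx2⟩
      have h1 : x = m⁻¹ * (m * x * m⁻¹) * m⁻¹⁻¹ := by group
      constructor
      · have := M.mul_mem (M.mul_mem (M.inv_mem hm) hx1) hm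
        simpa [mul_assoc] using this
      · rw [h1]; exact Subgroup.Normal.conj_mem ‹N.Normal› _ hx2 m⁻¹
  have hH₀M : H₀ ≤ M := le_trans Subgroup.le_normalizer hH₁M
  have hHM : H ≤ M := le_trans hHnorm hH₁M
  -- consider K = H ⊔ (M ⊓ N)
  have hKG : H ⊔ (M ⊓ N) ≤ G := sup_le hHG (le_trans inf_le_right hNG)
  rcases hmax (H ⊔ (M ⊓ N)) le_sup_left hKG with hK | hK
  · -- K = H: then M ⊓ N = H₀ and M normalizes it, so M ≤ H₁
    have hMN : M ⊓ N = H₀ := by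
      apply le_antisymm
      · have : M ⊓ N ≤ H := le_trans le_sup_right hK.le
        exact le_inf this inf_le_right
      · exact le_inf hH₀M inf_le_right
    apply le_antisymm _ hH₁M
    rw [← hMN]
    exact hMnorm
  · -- K = G: then N ≤ M, so M = N ⊔ H₁, contradiction
    exfalso
    apply hMne
    apply le_antisymm hMG₁
    have hNM : N ≤ M := by
      intro n hn
      have hnK : n ∈ H ⊔ (M ⊓ N) := hK ▸ hNG hn
      have hHn : H ≤ Subgroup.normalizer ((M ⊓ N : Subgroup A) : Set A) := le_trans hHM hMnorm
      obtain ⟨h, hh, p, hp, rfl⟩ := aux_sup_eq_mul H (M ⊓ N) hHn _ hnK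
      have hpN : p ∈ N := hp.2
      have hhN : h ∈ N := by
        have : h = (h * p) * p⁻¹ := by group
        rw [this]; exact N.mul_mem hn (N.inv_mem hpN)
      exact M.mul_mem (hH₀M ⟨hh, hhN⟩) hp.1
    exact sup_le hNM hH₁M
end

section
/- Let F be a finite field with q = |F| elements and let n ≥ 2. Then (1 − q⁻¹ − q⁻²)·q^(n²) < |GL_n(F)| ≤ (1 − q⁻¹)·(1 − q⁻²)·q^(n²), where the inequalities hold in the real numbers. -/
/-!
Writing `a = q⁻¹`, the order formula `|GL_n(F)| = ∏_{i<n} (qⁿ - qⁱ)` becomes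
`q^(n²) · ∏_{k=1}^{n} (1 - aᵏ)`. Every factor lies in `[0, 1]`, so the product is at most its
first two factors `(1 - a)(1 - a²)`. For the lower bound, `1 - a - a² + a^(n+1)` stays below the
product by induction on `n`: passing from `n` to `n + 1` costs at most `a^(n+1) - a^(n+2)` because
`a^(n+1) ≤ a²`.
-/

open Finset

theorem prod_range_pow_sub_pow {r : ℝ} (hr : r ≠ 0) (n : ℕ) :
    ∏ i ∈ range n, (r ^ n - r ^ i) = r ^ (n ^ 2) * ∏ k ∈ range n, (1 - r⁻¹ ^ (k + 1)) := by
  have hfactor : ∀ k ∈ range n, r ^ n - r ^ (n - 1 - k) = r ^ n * (1 - r⁻¹ ^ (k + 1)) := by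
    intro k hk
    have hk : k + 1 ≤ n := mem_range.1 hk
    rw [show n - 1 - k = n - (k + 1) by omega, pow_sub₀ r hr hk, inv_pow]
    ring
  rw [← prod_range_reflect, prod_congr rfl hfactor, prod_mul_distrib, prod_const, card_range,
    ← pow_mul, sq]

theorem card_GL_field_eq_mul_prod (F : Type*) [Field F] [Fintype F] (n : ℕ) :
    (Nat.card (Matrix.GeneralLinearGroup (Fin n) F) : ℝ) =
      (Fintype.card F : ℝ) ^ (n ^ 2) * ∏ k ∈ range n, (1 - (Fintype.card F : ℝ)⁻¹ ^ (k + 1)) := by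
  have hq : (Fintype.card F : ℝ) ≠ 0 := by positivity
  rw [← prod_range_pow_sub_pow hq, Matrix.card_GL_field, Nat.cast_prod,
    ← Fin.prod_univ_eq_prod_range (fun i => (Fintype.card F : ℝ) ^ n - (Fintype.card F : ℝ) ^ i)]
  refine prod_congr rfl fun i _ => ?_
  rw [Nat.cast_sub (Nat.pow_le_pow_right Fintype.card_pos i.isLt.le)]
  push_cast
  rfl

theorem prod_range_one_sub_pow_le {a : ℝ} (ha₀ : 0 ≤ a) (ha₁ : a ≤ 1) {n : ℕ} (hn : 2 ≤ n) :
    ∏ k ∈ range n, (1 - a ^ (k + 1)) ≤ (1 - a) * (1 - a ^ 2) := by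
  have hfactor : ∀ k ∈ range n, 0 ≤ 1 - a ^ (k + 1) ∧ 1 - a ^ (k + 1) ≤ 1 := fun k _ =>
    ⟨sub_nonneg.2 (pow_le_one₀ ha₀ ha₁), sub_le_self _ (pow_nonneg ha₀ _)⟩
  calc ∏ k ∈ range n, (1 - a ^ (k + 1))
      ≤ ∏ k ∈ range 2, (1 - a ^ (k + 1)) :=
        prod_le_prod_of_subset_of_le_one (range_subset_range.2 hn)
          (fun k hk => (hfactor k hk).1) (fun k hk _ => (hfactor k hk).2)
    _ = (1 - a) * (1 - a ^ 2) := by simp [prod_range_succ]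

theorem one_sub_sub_add_pow_le_prod_range_one_sub_pow {a : ℝ} (ha₀ : 0 ≤ a) (ha₁ : a ≤ 1)
    {n : ℕ} (hn : 1 ≤ n) :
    1 - a - a ^ 2 + a ^ (n + 1) ≤ ∏ k ∈ range n, (1 - a ^ (k + 1)) := by
  induction n, hn using Nat.le_induction with
  | base => simp
  | succ n hn ih =>
    have hpow : a ^ (n + 1) ≤ a ^ 2 := pow_le_pow_of_le_one ha₀ ha₁ (by omega)
    have hfactor : 0 ≤ 1 - a ^ (n + 1) := sub_nonneg.2 (pow_le_one₀ ha₀ ha₁)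
    rw [prod_range_succ]
    calc 1 - a - a ^ 2 + a ^ (n + 1 + 1)
        ≤ (1 - a - a ^ 2 + a ^ (n + 1)) * (1 - a ^ (n + 1)) := by
          rw [pow_succ a (n + 1)]
          nlinarith [mul_nonneg (pow_nonneg ha₀ (n + 1)) (sub_nonneg.2 hpow)]
      _ ≤ (∏ k ∈ range n, (1 - a ^ (k + 1))) * (1 - a ^ (n + 1)) := by gcongr

/-- Lemma 2.2 (general linear case): for a finite field `F` with `q` elements and `n ≥ 2`,
`(1 − q⁻¹ − q⁻²)·q^(n²) < |GL_n(F)| ≤ (1 − q⁻¹)(1 − q⁻²)·q^(n²)`. -/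
theorem stmt4 (F : Type*) [Field F] [Fintype F] (q n : ℕ) (hq : Fintype.card F = q)
    (hn : 2 ≤ n) :
    (1 - (q : ℝ)⁻¹ - ((q : ℝ) ^ 2)⁻¹) * (q : ℝ) ^ (n ^ 2) <
        (Nat.card (Matrix.GeneralLinearGroup (Fin n) F) : ℝ) ∧
      (Nat.card (Matrix.GeneralLinearGroup (Fin n) F) : ℝ) ≤
        (1 - (q : ℝ)⁻¹) * (1 - ((q : ℝ) ^ 2)⁻¹) * (q : ℝ) ^ (n ^ 2) := by
  subst hq
  have hq₀ : (0 : ℝ) < Fintype.card F := by exact_mod_cast Fintype.card_pos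
  have ha₀ : (0 : ℝ) < (Fintype.card F : ℝ)⁻¹ := inv_pos.2 hq₀
  have ha₁ : (Fintype.card F : ℝ)⁻¹ ≤ 1 :=
    inv_le_one_of_one_le₀ (by exact_mod_cast Fintype.card_pos)
  have hlower := one_sub_sub_add_pow_le_prod_range_one_sub_pow ha₀.le ha₁ (n := n) (by omega)
  have hupper := prod_range_one_sub_pow_le ha₀.le ha₁ hn
  rw [card_GL_field_eq_mul_prod, ← inv_pow]
  constructor
  · rw [mul_comm]
    have := pow_pos ha₀ (n + 1)
    gcongr
    linarith
  · rw [mul_comm]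
    gcongr
end

section
/- Let F be a finite field with q = |F| elements, let l ≥ 2, and set n = 2l (so n ≥ 4). Then (1 − q⁻² − q⁻⁴)·q^(n(n+1)/2) < |Sp_n(F)| ≤ (1 − q⁻²)·(1 − q⁻⁴)·q^(n(n+1)/2), where the inequalities hold in the real numbers. -/
namespace SpCard
open Matrix Module
set_option linter.unusedSectionVars false
set_option linter.unreachableTactic false
set_option linter.unusedTactic false
set_option maxHeartbeats 1000000

variable {F : Type*} [Field F] [Fintype F] {l : ℕ}

/-- The standard symplectic form on `(Fin l ⊕ Fin l) → F`. -/
def om (x y : (Fin l ⊕ Fin l) → F) : F := x ⬝ᵥ (Matrix.J (Fin l) F *ᵥ y)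

theorem om_add_right (x y z : (Fin l ⊕ Fin l) → F) : om x (y + z) = om x y + om x z := by
  simp [om, mulVec_add, dotProduct_add]

theorem om_smul_right (c : F) (x y : (Fin l ⊕ Fin l) → F) : om x (c • y) = c * om x y := by
  simp [om, mulVec_smul, dotProduct_smul, smul_eq_mul]

theorem om_add_left (x y z : (Fin l ⊕ Fin l) → F) : om (x + y) z = om x z + om y z := by
  simp [om, add_dotProduct]

theorem om_smul_left (c : F) (x y : (Fin l ⊕ Fin l) → F) : om (c • x) y = c * om x y := by
  simp [om, smul_dotProduct, smul_eq_mul]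

theorem om_skew (x y : (Fin l ⊕ Fin l) → F) : om y x = - om x y := by
  rw [om, om, Matrix.dotProduct_mulVec, ← Matrix.mulVec_transpose, J_transpose,
    Matrix.neg_mulVec, neg_dotProduct, dotProduct_comm]

theorem om_self (x : (Fin l ⊕ Fin l) → F) : om x x = 0 := by
  rw [om, Matrix.J, Matrix.fromBlocks_mulVec]
  nth_rewrite 1 [← Sum.elim_comp_inl_inr x]
  rw [sumElim_dotProduct_sumElim]
  simp only [Matrix.zero_mulVec, Matrix.one_mulVec, Matrix.neg_mulVec,
    zero_add, add_zero, dotProduct_neg]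
  rw [dotProduct_comm]
  exact neg_add_cancel _

theorem om_sum_right {ι : Type*} (s : Finset ι) (x : (Fin l ⊕ Fin l) → F)
    (g : ι → F) (v : ι → (Fin l ⊕ Fin l) → F) :
    om x (∑ i ∈ s, g i • v i) = ∑ i ∈ s, g i * om x (v i) := by
  classical
  induction s using Finset.induction with
  | empty => simp [om]
  | insert _ _ h ih => rw [Finset.sum_insert h, Finset.sum_insert h, om_add_right, om_smul_right, ih]

theorem om_sum_left {ι : Type*} (s : Finset ι) (x : (Fin l ⊕ Fin l) → F)
    (g : ι → F) (v : ι → (Fin l ⊕ Fin l) → F) :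
    om (∑ i ∈ s, g i • v i) x = ∑ i ∈ s, g i * om (v i) x := by
  classical
  induction s using Finset.induction with
  | empty => simp [om]
  | insert _ _ h ih => rw [Finset.sum_insert h, Finset.sum_insert h, om_add_left, om_smul_left, ih]

/-- Nondegeneracy. -/
theorem om_nondeg {z : (Fin l ⊕ Fin l) → F} (h : ∀ x, om x z = 0) : z = 0 := by
  have hJ : Matrix.J (Fin l) F *ᵥ z = 0 := by
    funext j
    have := h (Pi.single j 1)
    rwa [om, single_dotProduct, one_mul] at this
  have h2 : Matrix.J (Fin l) F *ᵥ (Matrix.J (Fin l) F *ᵥ z) = -z := by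
    rw [Matrix.mulVec_mulVec, Matrix.J_squared, Matrix.neg_mulVec, Matrix.one_mulVec]
  rw [hJ, Matrix.mulVec_zero] at h2
  simpa using h2.symm

/-- The number of solutions of a system of independent linear conditions. -/
theorem card_solutions {ι : Type*} [Fintype ι] [DecidableEq ι]
    (w : ι → (Fin l ⊕ Fin l) → F) (hw : LinearIndependent F w) (c : ι → F) :
    Nat.card {x : (Fin l ⊕ Fin l) → F // ∀ i, om x (w i) = c i} =
      Fintype.card F ^ (2 * l - Fintype.card ι) := by
  classical
  set φ : ((Fin l ⊕ Fin l) → F) →ₗ[F] (ι → F) :=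
    { toFun := fun x i => om x (w i)
      map_add' := fun x y => by funext i; exact om_add_left x y (w i)
      map_smul' := fun c x => by funext i; exact om_smul_left c x (w i) } with hφ
  have hφ_apply : ∀ x i, φ x i = om x (w i) := fun _ _ => rfl
  -- surjectivity
  have hsurj : Function.Surjective φ := by
    rw [← LinearMap.range_eq_top]
    by_contra h
    obtain ⟨f, hf0, hf⟩ := Submodule.exists_dual_map_eq_bot_of_lt_top
      (lt_top_iff_ne_top.mpr h) inferInstance
    set t : ι → F := fun i => f fun j => if i = j then 1 else 0 with ht
    have hfz : ∀ y ∈ LinearMap.range φ, f y = 0 := by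
      intro y hy
      have : f y ∈ (LinearMap.range φ).map f := Submodule.mem_map_of_mem hy
      rwa [hf, Submodule.mem_bot] at this
    have hz : (∑ i, t i • w i) = 0 := by
      apply om_nondeg
      intro x
      rw [om_sum_right]
      have := hfz (φ x) (LinearMap.mem_range_self φ x)
      rw [LinearMap.pi_apply_eq_sum_univ f (φ x)] at this
      rw [← this]
      exact Finset.sum_congr rfl fun i _ => by
        rw [hφ_apply, smul_eq_mul, mul_comm]
    have ht0 : t = 0 := by
      have := Fintype.linearIndependent_iff.mp hw t hz
      funext i; exact this i
    apply hf0
    apply LinearMap.ext; intro y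
    have : f y = ∑ i, y i • t i := LinearMap.pi_apply_eq_sum_univ f y
    rw [this, ht0]
    simp
  -- kernel cardinality
  have hfr : finrank F (LinearMap.ker φ) = 2 * l - Fintype.card ι := by
    have h1 := LinearMap.finrank_range_add_finrank_ker φ
    rw [LinearMap.range_eq_top.mpr hsurj] at h1
    have h2 : finrank F (⊤ : Submodule F (ι → F)) = Fintype.card ι := by
      rw [finrank_top, Module.finrank_pi]
    have h3 : finrank F ((Fin l ⊕ Fin l) → F) = 2 * l := by
      rw [Module.finrank_pi]
      simp [Fintype.card_sum]
      ring
    omega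
  haveI : Fintype (LinearMap.ker φ) := Fintype.ofFinite _
  have hker : Nat.card (LinearMap.ker φ) = Fintype.card F ^ (2 * l - Fintype.card ι) := by
    rw [Nat.card_eq_fintype_card, card_eq_pow_finrank (K := F), hfr]
  -- fiber is a coset of the kernel
  obtain ⟨x₀, hx₀⟩ := hsurj c
  have e : {x : (Fin l ⊕ Fin l) → F // ∀ i, om x (w i) = c i} ≃ LinearMap.ker φ :=
    { toFun := fun x => ⟨x.1 - x₀, by
        rw [LinearMap.mem_ker, map_sub, hx₀]
        have : φ x.1 = c := funext fun i => x.2 i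
        rw [this, sub_self]⟩
      invFun := fun y => ⟨y.1 + x₀, by
        intro i
        have hy : φ y.1 = 0 := y.2
        have : φ (y.1 + x₀) = c := by rw [map_add, hy, hx₀, zero_add]
        rw [← hφ_apply]
        rw [this]⟩
      left_inv := fun x => by ext : 1; simp
      right_inv := fun y => by ext : 1; simp }
  rw [Nat.card_congr e, hker]

theorem om_zero_left (x : (Fin l ⊕ Fin l) → F) : om 0 x = 0 := by
  simp [om]

theorem om_zero_right (x : (Fin l ⊕ Fin l) → F) : om x 0 = 0 := by
  simp [om]

/-- A symplectic system: `k` hyperbolic pairs. -/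
def IsSys {k : ℕ} (a b : Fin k → (Fin l ⊕ Fin l) → F) : Prop :=
  (∀ i j, om (a i) (a j) = 0) ∧ (∀ i j, om (b i) (b j) = 0) ∧
    (∀ i j, om (a i) (b j) = if i = j then -1 else 0)

variable {k : ℕ} {a b : Fin k → (Fin l ⊕ Fin l) → F}

theorem IsSys.om_ba (h : IsSys a b) (i j : Fin k) :
    om (b i) (a j) = if i = j then 1 else 0 := by
  rw [om_skew, h.2.2]
  by_cases hij : i = j
  · subst hij; simp
  · rw [if_neg hij, if_neg (fun h' : j = i => hij h'.symm), neg_zero]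

theorem pair_b (h : IsSys a b) (g : Fin k ⊕ Fin k → F) (j : Fin k) :
    om (∑ s, g s • Sum.elim a b s) (b j) = - g (Sum.inl j) := by
  rw [om_sum_left, Fintype.sum_sum_type]
  simp only [Sum.elim_inl, Sum.elim_inr, h.2.1, h.2.2, mul_ite, mul_zero, mul_neg_one]
  simp [Finset.sum_ite_eq']

theorem pair_a (h : IsSys a b) (g : Fin k ⊕ Fin k → F) (j : Fin k) :
    om (∑ s, g s • Sum.elim a b s) (a j) = g (Sum.inr j) := by
  rw [om_sum_left, Fintype.sum_sum_type]
  simp only [Sum.elim_inl, Sum.elim_inr, h.1, h.om_ba, mul_ite, mul_zero, mul_one]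
  simp [Finset.sum_ite_eq']

theorem IsSys.linearIndependent (h : IsSys a b) :
    LinearIndependent F (Sum.elim a b) := by
  rw [Fintype.linearIndependent_iff]
  intro g hg s
  cases s with
  | inl j =>
    have := pair_b h g j
    rw [hg, om_zero_left] at this
    have := this.symm
    rwa [neg_eq_zero] at this
  | inr j =>
    have := pair_a h g j
    rw [hg, om_zero_left] at this
    exact this.symm

theorem IsSys.perp_span_eq_zero (h : IsSys a b) {x : (Fin l ⊕ Fin l) → F}
    (hx : x ∈ Submodule.span F (Set.range (Sum.elim a b)))
    (ha : ∀ i, om x (a i) = 0) (hb : ∀ i, om x (b i) = 0) : x = 0 := by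
  obtain ⟨g, hg⟩ := (Submodule.mem_span_range_iff_exists_fun F).mp hx
  have hga : ∀ j, g (Sum.inr j) = 0 := by
    intro j
    have := pair_a h g j
    rw [hg, ha j] at this
    exact this.symm
  have hgb : ∀ j, g (Sum.inl j) = 0 := by
    intro j
    have := pair_b h g j
    rw [hg, hb j] at this
    have := this.symm
    rwa [neg_eq_zero] at this
  rw [← hg]
  apply Finset.sum_eq_zero
  intro s _
  cases s with
  | inl j => rw [hgb j, zero_smul]
  | inr j => rw [hga j, zero_smul]

/-- The type of symplectic systems of `k` hyperbolic pairs. -/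
def Sys (F : Type*) [Field F] (l k : ℕ) :=
  {p : (Fin k → (Fin l ⊕ Fin l) → F) × (Fin k → (Fin l ⊕ Fin l) → F) // IsSys p.1 p.2}

instance {k : ℕ} [Fintype F] : Finite (Sys F l k) := by
  unfold Sys; infer_instance

/-- Extensions of a symplectic system by one hyperbolic pair. -/
def Ext {k : ℕ} (p : Sys F l k) :=
  {z : ((Fin l ⊕ Fin l) → F) × ((Fin l ⊕ Fin l) → F) //
    (∀ i, om z.1 (p.1.1 i) = 0) ∧ (∀ i, om z.1 (p.1.2 i) = 0) ∧
      (∀ i, om z.2 (p.1.1 i) = 0) ∧ (∀ i, om z.2 (p.1.2 i) = 0) ∧ om z.1 z.2 = -1}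

instance {k : ℕ} [Fintype F] (p : Sys F l k) : Finite (Ext p) := by
  unfold Ext; infer_instance


theorem sigma_ext {k : ℕ} {p p' : Sys F l k} {z : Ext p} {z' : Ext p'}
    (h : p = p') (hz : z.1 = z'.1) :
    (⟨p, z⟩ : Σ p : Sys F l k, Ext p) = ⟨p', z'⟩ := by
  subst h
  exact congrArg _ (Subtype.ext hz)

/-- Peeling off the last hyperbolic pair. -/
def sysSuccEquiv (k : ℕ) : Sys F l (k + 1) ≃ Σ p : Sys F l k, Ext p where
  toFun q :=
    ⟨⟨(q.1.1 ∘ Fin.castSucc, q.1.2 ∘ Fin.castSucc), by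
        obtain ⟨h1, h2, h3⟩ := q.2
        refine ⟨fun i j => h1 _ _, fun i j => h2 _ _, fun i j => ?_⟩
        have := h3 i.castSucc j.castSucc
        simp only [Fin.castSucc_inj] at this
        exact this⟩,
      ⟨(q.1.1 (Fin.last k), q.1.2 (Fin.last k)), by
        obtain ⟨h1, h2, h3⟩ := q.2
        refine ⟨fun i => h1 _ _, fun i => ?_, fun i => ?_, fun i => h2 _ _, ?_⟩
        · exact (h3 (Fin.last k) i.castSucc).trans (if_neg (Fin.castSucc_lt_last i).ne')
        · exact (om_skew (q.1.1 i.castSucc) (q.1.2 (Fin.last k))).trans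
            (by rw [h3, if_neg (Fin.castSucc_lt_last i).ne, neg_zero])
        · exact (h3 (Fin.last k) (Fin.last k)).trans (if_pos rfl)⟩⟩
  invFun pz :=
    ⟨(Fin.snoc pz.1.1.1 pz.2.1.1, Fin.snoc pz.1.1.2 pz.2.1.2), by
      obtain ⟨⟨⟨a, b⟩, hp⟩, ⟨⟨x, y⟩, hz⟩⟩ := pz
      obtain ⟨c1, c2, c3, c4, c5⟩ := hz
      refine ⟨?_, ?_, ?_⟩ <;> intro i j
      · induction i using Fin.lastCases with
        | last =>
          induction j using Fin.lastCases with
          | last => simp only [Fin.snoc_last]; exact om_self x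
          | cast j => simp only [Fin.snoc_last, Fin.snoc_castSucc]; exact c1 j
        | cast i =>
          induction j using Fin.lastCases with
          | last =>
            simp only [Fin.snoc_last, Fin.snoc_castSucc]
            rw [om_skew, c1 i, neg_zero]
          | cast j => simp only [Fin.snoc_castSucc]; exact hp.1 i j
      · induction i using Fin.lastCases with
        | last =>
          induction j using Fin.lastCases with
          | last => simp only [Fin.snoc_last]; exact om_self y
          | cast j => simp only [Fin.snoc_last, Fin.snoc_castSucc]; exact c4 j
        | cast i =>
          induction j using Fin.lastCases with
          | last =>
            simp only [Fin.snoc_last, Fin.snoc_castSucc]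
            rw [om_skew, c4 i, neg_zero]
          | cast j => simp only [Fin.snoc_castSucc]; exact hp.2.1 i j
      · induction i using Fin.lastCases with
        | last =>
          induction j using Fin.lastCases with
          | last => simp only [Fin.snoc_last]; rw [if_true]; exact c5
          | cast j =>
            simp only [Fin.snoc_last, Fin.snoc_castSucc]
            rw [if_neg (Fin.castSucc_lt_last j).ne']
            exact c2 j
        | cast i =>
          induction j using Fin.lastCases with
          | last =>
            simp only [Fin.snoc_last, Fin.snoc_castSucc]
            rw [if_neg (Fin.castSucc_lt_last i).ne, om_skew, c3 i, neg_zero]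
          | cast j =>
            simp only [Fin.snoc_castSucc]
            rw [hp.2.2 i j]
            simp [Fin.castSucc_inj]⟩
  left_inv q := by
    apply Subtype.ext
    refine Prod.ext ?_ ?_ <;>
      · funext i
        induction i using Fin.lastCases with
        | last => simp
        | cast i => simp
  right_inv pz := by
    obtain ⟨⟨⟨a, b⟩, hp⟩, ⟨⟨x, y⟩, hz⟩⟩ := pz
    refine sigma_ext (Subtype.ext (Prod.ext ?_ ?_)) (Prod.ext ?_ ?_) <;>
      first
        | (funext i; simp)
        | simp

theorem card_A {k : ℕ} {a b : Fin k → (Fin l ⊕ Fin l) → F} (hp : IsSys a b) :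
    Nat.card {x : (Fin l ⊕ Fin l) → F //
        (∀ s : Fin k ⊕ Fin k, om x (Sum.elim a b s) = 0) ∧ x ≠ 0} =
      Fintype.card F ^ (2 * l - 2 * k) - 1 := by
  classical
  have hT : Nat.card {x : (Fin l ⊕ Fin l) → F //
      ∀ s : Fin k ⊕ Fin k, om x (Sum.elim a b s) = 0} = Fintype.card F ^ (2 * l - 2 * k) := by
    have h := card_solutions (Sum.elim a b) hp.linearIndependent (fun _ => (0 : F))
    rw [Nat.card_congr (Equiv.subtypeEquivRight (q := fun x => ∀ s : Fin k ⊕ Fin k,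
      om x (Sum.elim a b s) = (fun _ => (0:F)) s) (fun x => by simp))]
    rw [h]
    congr 1
    simp only [Fintype.card_sum, Fintype.card_fin]
    omega
  set T := {x : (Fin l ⊕ Fin l) → F // ∀ s : Fin k ⊕ Fin k, om x (Sum.elim a b s) = 0} with hTdef
  let z0 : T := ⟨0, fun s => om_zero_left _⟩
  have e : {x : (Fin l ⊕ Fin l) → F //
      (∀ s : Fin k ⊕ Fin k, om x (Sum.elim a b s) = 0) ∧ x ≠ 0} ≃ {y : T // y ≠ z0} :=
    { toFun := fun x => ⟨⟨x.1, x.2.1⟩, fun hc => x.2.2 (congrArg Subtype.val hc)⟩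
      invFun := fun y => ⟨y.1.1, y.1.2, fun h0 => y.2 (Subtype.ext h0)⟩
      left_inv := fun x => rfl
      right_inv := fun y => rfl }
  haveI : Fintype T := Fintype.ofFinite _
  rw [Nat.card_congr e, Nat.card_eq_fintype_card]
  have h1 : Fintype.card {y : T // y = z0} = 1 := Fintype.card_subtype_eq z0
  have h2 := Fintype.card_subtype_compl (p := fun y : T => y = z0)
  rw [h1] at h2
  have : Fintype.card {y : T // y ≠ z0} = Fintype.card {y : T // ¬ y = z0} := rfl
  rw [this, h2, ← Nat.card_eq_fintype_card, hT]

theorem card_B {k : ℕ} {a b : Fin k → (Fin l ⊕ Fin l) → F} (hp : IsSys a b)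
    {x : (Fin l ⊕ Fin l) → F} (hx : ∀ s : Fin k ⊕ Fin k, om x (Sum.elim a b s) = 0)
    (hx0 : x ≠ 0) :
    Nat.card {y : (Fin l ⊕ Fin l) → F //
        (∀ i, om y (a i) = 0) ∧ (∀ i, om y (b i) = 0) ∧ om y x = 1} =
      Fintype.card F ^ (2 * l - (2 * k + 1)) := by
  classical
  have hxnotmem : x ∉ Submodule.span F (Set.range (Sum.elim a b)) := fun hmem =>
    hx0 (hp.perp_span_eq_zero hmem (fun i => hx (Sum.inl i)) (fun i => hx (Sum.inr i)))
  have h2 : LinearIndependent F (fun _ : Unit => x) := linearIndependent_unique_iff.mpr hx0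
  have hdisj : Disjoint (Submodule.span F (Set.range (Sum.elim a b)))
      (Submodule.span F (Set.range (fun _ : Unit => x))) := by
    rw [Set.range_const, Submodule.disjoint_span_singleton' hx0]
    exact hxnotmem
  have hw' : LinearIndependent F (Sum.elim (Sum.elim a b) (fun _ : Unit => x)) :=
    hp.linearIndependent.sum_type h2 hdisj
  have h := card_solutions (Sum.elim (Sum.elim a b) (fun _ : Unit => x)) hw'
    (Sum.elim (fun _ => (0 : F)) (fun _ => (1 : F)))
  rw [Nat.card_congr (Equiv.subtypeEquivRight (q := fun y => ∀ s,
    om y (Sum.elim (Sum.elim a b) (fun _ : Unit => x) s) =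
      Sum.elim (fun _ => (0:F)) (fun _ => (1:F)) s) (fun y => by
    constructor
    · rintro ⟨hy1, hy2, hy3⟩ (⟨i | i⟩ | u)
      · exact hy1 i
      · exact hy2 i
      · exact hy3
    · intro h
      exact ⟨fun i => h (Sum.inl (Sum.inl i)), fun i => h (Sum.inl (Sum.inr i)),
        h (Sum.inr ())⟩))]
  rw [h]
  congr 1
  simp only [Fintype.card_sum, Fintype.card_fin, Fintype.card_unit]
  omega

theorem card_ext {k : ℕ} (p : Sys F l k) :
    Nat.card (Ext p) =
      (Fintype.card F ^ (2 * l - 2 * k) - 1) * Fintype.card F ^ (2 * l - (2 * k + 1)) := by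
  classical
  obtain ⟨⟨a, b⟩, hp⟩ := p
  let A := {x : (Fin l ⊕ Fin l) → F //
    (∀ s : Fin k ⊕ Fin k, om x (Sum.elim a b s) = 0) ∧ x ≠ 0}
  let B : ((Fin l ⊕ Fin l) → F) → Type _ := fun x =>
    {y : (Fin l ⊕ Fin l) → F //
      (∀ i, om y (a i) = 0) ∧ (∀ i, om y (b i) = 0) ∧ om y x = 1}
  have e : Ext (⟨(a, b), hp⟩ : Sys F l k) ≃ Σ x : A, B x.1 :=
    { toFun := fun z =>
        ⟨⟨z.1.1, ⟨fun s => Sum.rec (fun i => z.2.1 i) (fun i => z.2.2.1 i) s, fun h0 => by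
            have hc := z.2.2.2.2.2
            rw [h0, om_zero_left] at hc
            exact (by norm_num : (0 : F) ≠ -1) hc⟩⟩,
          ⟨z.1.2, ⟨fun i => z.2.2.2.1 i, fun i => z.2.2.2.2.1 i, by
            rw [om_skew, z.2.2.2.2.2]; norm_num⟩⟩⟩
      invFun := fun xy => ⟨(xy.1.1, xy.2.1), ⟨fun i => xy.1.2.1 (Sum.inl i),
        fun i => xy.1.2.1 (Sum.inr i), fun i => xy.2.2.1 i, fun i => xy.2.2.2.1 i, by
          rw [om_skew, xy.2.2.2.2]⟩⟩
      left_inv := fun z => rfl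
      right_inv := fun xy => rfl }
  haveI : Fintype A := Fintype.ofFinite _
  haveI : ∀ x : A, Fintype (B x.1) := fun x => Fintype.ofFinite _
  rw [Nat.card_congr e, Nat.card_eq_fintype_card, Fintype.card_sigma]
  have hB : ∀ x : A, Fintype.card (B x.1) = Fintype.card F ^ (2 * l - (2 * k + 1)) := fun x => by
    rw [← Nat.card_eq_fintype_card, card_B hp x.2.1 x.2.2]
  rw [Finset.sum_congr rfl (fun x _ => hB x), Finset.sum_const, Finset.card_univ, smul_eq_mul,
    ← Nat.card_eq_fintype_card, card_A hp]

theorem card_sys_zero : Nat.card (Sys F l 0) = 1 := by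
  haveI : Unique (Sys F l 0) :=
    { default := ⟨(fun i => i.elim0, fun i => i.elim0),
        ⟨fun i => i.elim0, fun i => i.elim0, fun i => i.elim0⟩⟩
      uniq := fun p => Subtype.ext (Prod.ext (funext fun i => i.elim0) (funext fun i => i.elim0)) }
  exact Nat.card_unique

theorem card_sys_succ (k : ℕ) :
    Nat.card (Sys F l (k + 1)) = Nat.card (Sys F l k) *
      ((Fintype.card F ^ (2 * l - 2 * k) - 1) * Fintype.card F ^ (2 * l - (2 * k + 1))) := by
  classical
  haveI : Fintype (Sys F l k) := Fintype.ofFinite _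
  haveI : ∀ p : Sys F l k, Fintype (Ext p) := fun p => Fintype.ofFinite _
  rw [Nat.card_congr (sysSuccEquiv k), Nat.card_eq_fintype_card, Fintype.card_sigma,
    Finset.sum_congr rfl (fun p _ => by rw [← Nat.card_eq_fintype_card, card_ext p]),
    Finset.sum_const, Finset.card_univ, smul_eq_mul, Nat.card_eq_fintype_card]

theorem card_sys (k : ℕ) :
    Nat.card (Sys F l k) = ∏ j ∈ Finset.range k,
      ((Fintype.card F ^ (2 * l - 2 * j) - 1) * Fintype.card F ^ (2 * l - (2 * j + 1))) := by
  induction k with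
  | zero => simpa using card_sys_zero
  | succ k ih => rw [card_sys_succ k, ih, Finset.prod_range_succ]

theorem mul_J_mul_transpose_apply (A : Matrix (Fin l ⊕ Fin l) (Fin l ⊕ Fin l) F)
    (u v : Fin l ⊕ Fin l) :
    (A * Matrix.J (Fin l) F * Aᵀ) u v = om (A u) (A v) := by
  simp only [om, Matrix.mul_apply, Matrix.transpose_apply, dotProduct, Matrix.mulVec]
  simp only [Finset.sum_mul, Finset.mul_sum, mul_assoc]
  rw [Finset.sum_comm]

theorem J_inl_inl (i j : Fin l) : Matrix.J (Fin l) F (Sum.inl i) (Sum.inl j) = 0 := rfl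

theorem J_inr_inr (i j : Fin l) : Matrix.J (Fin l) F (Sum.inr i) (Sum.inr j) = 0 := rfl

theorem J_inl_inr (i j : Fin l) :
    Matrix.J (Fin l) F (Sum.inl i) (Sum.inr j) = if i = j then -1 else 0 := by
  simp only [Matrix.J, Matrix.fromBlocks_apply₁₂, Matrix.neg_apply, Matrix.one_apply]
  split_ifs <;> simp

theorem J_inr_inl (i j : Fin l) :
    Matrix.J (Fin l) F (Sum.inr i) (Sum.inl j) = if i = j then 1 else 0 := by
  simp only [Matrix.J, Matrix.fromBlocks_apply₂₁, Matrix.one_apply]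

/-- The symplectic group is in bijection with the set of full symplectic systems. -/
def spEquivSys : Matrix.symplecticGroup (Fin l) F ≃ Sys F l l where
  toFun A :=
    ⟨(fun i => A.1 (Sum.inl i), fun i => A.1 (Sum.inr i)), by
      have h := SymplecticGroup.mem_iff.mp A.2
      refine ⟨fun i j => ?_, fun i j => ?_, fun i j => ?_⟩
      · rw [← mul_J_mul_transpose_apply, h, J_inl_inl]
      · rw [← mul_J_mul_transpose_apply, h, J_inr_inr]
      · rw [← mul_J_mul_transpose_apply, h, J_inl_inr]⟩
  invFun s :=
    ⟨Matrix.of (Sum.elim s.1.1 s.1.2), by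
      obtain ⟨⟨a, b⟩, h1, h2, h3⟩ := s
      rw [SymplecticGroup.mem_iff]
      funext u v
      rw [mul_J_mul_transpose_apply]
      cases u with
      | inl i =>
        cases v with
        | inl j => rw [J_inl_inl]; exact h1 i j
        | inr j => rw [J_inl_inr]; exact h3 i j
      | inr i =>
        cases v with
        | inl j =>
          rw [J_inr_inl]
          show om (b i) (a j) = _
          rw [om_skew, h3 j i]
          by_cases hij : i = j
          · subst hij; simp
          · rw [if_neg (fun h' : j = i => hij h'.symm), if_neg hij, neg_zero]
        | inr j => rw [J_inr_inr]; exact h2 i j⟩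
  left_inv A := by
    apply Subtype.ext
    funext u v
    cases u <;> rfl
  right_inv s := rfl


theorem card_symplectic :
    Nat.card (Matrix.symplecticGroup (Fin l) F) = ∏ j ∈ Finset.range l,
      ((Fintype.card F ^ (2 * l - 2 * j) - 1) * Fintype.card F ^ (2 * l - (2 * j + 1))) := by
  rw [Nat.card_congr spEquivSys, card_sys]

theorem card_symplectic' {F : Type*} [Field F] [Fintype F] {l : ℕ} :
    Nat.card (Matrix.symplecticGroup (Fin l) F) = ∏ i ∈ Finset.range l,
      ((Fintype.card F ^ (2 * i + 2) - 1) * Fintype.card F ^ (2 * i + 1)) := by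
  rw [card_symplectic, ← Finset.prod_range_reflect]
  refine Finset.prod_congr rfl fun j hj => ?_
  rw [Finset.mem_range] at hj
  have h1 : 2 * l - 2 * (l - 1 - j) = 2 * j + 2 := by omega
  have h2 : 2 * l - (2 * (l - 1 - j) + 1) = 2 * j + 1 := by omega
  rw [h1, h2]

theorem sum_aux (l : ℕ) : ∑ i ∈ Finset.range l, (4 * i + 3) = l * (2 * l + 1) := by
  induction l with
  | zero => simp
  | succ n ih => rw [Finset.sum_range_succ, ih]; ring

theorem weierstrass (s : Finset ℕ) (f : ℕ → ℝ) (h0 : ∀ i ∈ s, 0 ≤ f i)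
    (h1 : ∀ i ∈ s, f i ≤ 1) : 1 - ∑ i ∈ s, f i ≤ ∏ i ∈ s, (1 - f i) := by
  classical
  induction s using Finset.induction with
  | empty => simp
  | insert a s' hns ih =>
    rw [Finset.sum_insert hns, Finset.prod_insert hns]
    have ha0 := h0 a (Finset.mem_insert_self a s')
    have ha1 := h1 a (Finset.mem_insert_self a s')
    have ihs := ih (fun i hi => h0 i (Finset.mem_insert_of_mem hi))
      (fun i hi => h1 i (Finset.mem_insert_of_mem hi))
    have hS : 0 ≤ ∑ i ∈ s', f i :=
      Finset.sum_nonneg fun i hi => h0 i (Finset.mem_insert_of_mem hi)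
    nlinarith [mul_le_mul_of_nonneg_left ihs (by linarith : (0:ℝ) ≤ 1 - f a),
      mul_nonneg ha0 hS]

theorem stmt5' (F : Type*) [Field F] [Fintype F] (q l : ℕ) (hq : Fintype.card F = q)
    (hl : 2 ≤ l) :
    (1 - ((q : ℝ) ^ 2)⁻¹ - ((q : ℝ) ^ 4)⁻¹) * (q : ℝ) ^ (l * (2 * l + 1)) <
        (Nat.card (Matrix.symplecticGroup (Fin l) F) : ℝ) ∧
      (Nat.card (Matrix.symplecticGroup (Fin l) F) : ℝ) ≤
        (1 - ((q : ℝ) ^ 2)⁻¹) * (1 - ((q : ℝ) ^ 4)⁻¹) * (q : ℝ) ^ (l * (2 * l + 1)) := by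
  subst hq
  set q := Fintype.card F with hq
  have hq2 : 2 ≤ q := Fintype.one_lt_card
  have hQ2 : (2 : ℝ) ≤ (q : ℝ) := by exact_mod_cast hq2
  have hQ0 : (0 : ℝ) < (q : ℝ) := by linarith
  set a : ℝ := ((q : ℝ) ^ 2)⁻¹ with ha
  have ha0 : 0 < a := by positivity
  have ha4 : a ≤ 1 / 4 := by
    rw [ha]
    rw [inv_le_iff_one_le_mul₀ (by positivity)]
    nlinarith
  have hb : ((q : ℝ) ^ 4)⁻¹ = a ^ 2 := by
    have h4 : ((q:ℝ) ^ 2) ^ 2 = (q:ℝ) ^ 4 := by ring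
    rw [ha, inv_pow, h4]
  -- the factors
  clear hq
  set g : ℕ → ℝ := fun i => ((q:ℝ) ^ (2 * i + 2))⁻¹ with hg
  have hg_eq : ∀ i, g i = a ^ (i + 1) := fun i => by
    rw [hg, ha, ← inv_pow, ← pow_mul]
    ring_nf
  have hg0 : ∀ i, 0 < g i := fun i => by rw [hg]; positivity
  have hg1 : ∀ i, g i ≤ 1/4 := fun i => by
    rw [hg_eq]
    calc a ^ (i + 1) ≤ (1/4 : ℝ) ^ (i + 1) := by
          exact pow_le_pow_left₀ ha0.le ha4 _
      _ ≤ (1/4 : ℝ) ^ 1 := by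
          apply pow_le_pow_of_le_one <;> norm_num
      _ = 1/4 := by norm_num
  set P : ℝ := ∏ i ∈ Finset.range l, (1 - g i) with hP
  -- cast of the cardinality
  have hcast : (Nat.card (Matrix.symplecticGroup (Fin l) F) : ℝ) = (q:ℝ) ^ (l * (2 * l + 1)) * P := by
    rw [card_symplectic', Nat.cast_prod, hP]
    have step : ∀ i, (((q ^ (2 * i + 2) - 1) * q ^ (2 * i + 1) : ℕ) : ℝ)
        = (q:ℝ) ^ (4 * i + 3) * (1 - g i) := by
      intro i
      have h1 : 1 ≤ q ^ (2 * i + 2) := Nat.one_le_pow _ _ (by omega)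
      push_cast [Nat.cast_sub h1]
      rw [hg]
      have hne : (q : ℝ) ^ (2 * i + 2) ≠ 0 := by positivity
      field_simp
      ring
    rw [Finset.prod_congr rfl fun i _ => step i, Finset.prod_mul_distrib,
      Finset.prod_pow_eq_pow_sum, sum_aux]
  have hQE : 0 < (q:ℝ) ^ (l * (2 * l + 1)) := by positivity
  -- upper bound for P
  have hsplit2 : P = (∏ i ∈ Finset.range 2, (1 - g i)) * ∏ i ∈ Finset.Ico 2 l, (1 - g i) := by
    rw [hP, ← Finset.prod_range_mul_prod_Ico _ hl]
  have hfac_pos : ∀ i, 0 < 1 - g i ∧ 1 - g i ≤ 1 := fun i =>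
    ⟨by have := hg1 i; linarith, by have := hg0 i; linarith⟩
  have hupper : P ≤ (1 - a) * (1 - a ^ 2) := by
    have h2 : (∏ i ∈ Finset.range 2, (1 - g i)) = (1 - a) * (1 - a ^ 2) := by
      rw [Finset.prod_range_succ, Finset.prod_range_one, hg_eq, hg_eq]
      norm_num
    rw [hsplit2, h2]
    have hle1 : (∏ i ∈ Finset.Ico 2 l, (1 - g i)) ≤ 1 :=
      Finset.prod_le_one (fun i _ => (hfac_pos i).1.le) (fun i _ => (hfac_pos i).2)

    have hpos : 0 ≤ (1 - a) * (1 - a ^ 2) := by nlinarith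
    nlinarith [Finset.prod_nonneg (fun i (_ : i ∈ Finset.Ico 2 l) => (hfac_pos i).1.le)]
  -- lower bound for P
  have hsplit1 : P = (1 - a) * ∏ i ∈ Finset.Ico 1 l, (1 - g i) := by
    rw [hP, ← Finset.prod_range_mul_prod_Ico _ (by omega : 1 ≤ l), Finset.prod_range_one,
      hg_eq]
    norm_num
  have hS_eq : ∑ i ∈ Finset.Ico 1 l, g i = a ^ 2 * ∑ i ∈ Finset.range (l - 1), a ^ i := by
    rw [Finset.sum_Ico_eq_sum_range, Finset.mul_sum]
    refine Finset.sum_congr rfl fun i hi => ?_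
    rw [hg_eq]
    ring
  have hlower : 1 - a - a ^ 2 < P := by
    have hR := weierstrass (Finset.Ico 1 l) g (fun i _ => (hg0 i).le)
      (fun i _ => by have := hg1 i; linarith)
    have hane : a ≠ 1 := ne_of_lt (by linarith)
    have hane' : a - 1 ≠ 0 := sub_ne_zero.mpr hane
    have hgeom : (1 - a) * ∑ i ∈ Finset.range (l - 1), a ^ i = 1 - a ^ (l - 1) := by
      rw [geom_sum_eq hane (l - 1)]
      generalize a ^ (l - 1) = t
      field_simp
      ring
    have hal : a ^ (l - 1) > 0 := by positivity
    have halle : a ^ (l - 1) ≤ 1 := by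
      apply pow_le_one₀ ha0.le; linarith [ha4]
    rw [hsplit1]
    have hprod_ge := hR
    have hS := hS_eq
    nlinarith [mul_le_mul_of_nonneg_left hR (by linarith : (0:ℝ) ≤ 1 - a),
      mul_pos (mul_pos ha0 ha0) hal]
  constructor
  · rw [hcast, hb]
    calc (1 - a - a ^ 2) * (q:ℝ) ^ (l * (2 * l + 1)) < P * (q:ℝ) ^ (l * (2 * l + 1)) := by
          exact mul_lt_mul_of_pos_right hlower hQE
      _ = (q:ℝ) ^ (l * (2 * l + 1)) * P := mul_comm _ _
  · rw [hcast, hb]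
    calc (q:ℝ) ^ (l * (2 * l + 1)) * P = P * (q:ℝ) ^ (l * (2 * l + 1)) := mul_comm _ _
      _ ≤ ((1 - a) * (1 - a ^ 2)) * (q:ℝ) ^ (l * (2 * l + 1)) := by
          exact mul_le_mul_of_nonneg_right hupper hQE.le

end SpCard

/-- Lemma 2.2 (symplectic case): for a finite field `F` with `q` elements and `n = 2l ≥ 4`,
`(1 − q⁻² − q⁻⁴)·q^(n(n+1)/2) < |Sp_n(F)| ≤ (1 − q⁻²)(1 − q⁻⁴)·q^(n(n+1)/2)`,
where `n(n+1)/2 = l(2l+1)`. -/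
theorem stmt5 (F : Type*) [Field F] [Fintype F] (q l : ℕ) (hq : Fintype.card F = q)
    (hl : 2 ≤ l) :
    (1 - ((q : ℝ) ^ 2)⁻¹ - ((q : ℝ) ^ 4)⁻¹) * (q : ℝ) ^ (l * (2 * l + 1)) <
        (Nat.card (Matrix.symplecticGroup (Fin l) F) : ℝ) ∧
      (Nat.card (Matrix.symplecticGroup (Fin l) F) : ℝ) ≤
        (1 - ((q : ℝ) ^ 2)⁻¹) * (1 - ((q : ℝ) ^ 4)⁻¹) * (q : ℝ) ^ (l * (2 * l + 1)) :=
  SpCard.stmt5' F q l hq hl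
end

section
/- Let F be a finite field with q = |F| elements and let n ≥ 2. Then q^(n²−2) < |PSL_n(F)| ≤ (1 − q⁻²)·q^(n²−1), where PSL_n(F) denotes the quotient of SL_n(F) by its center and the inequalities hold in the real numbers. -/
/-!
Since `det : GL_n(F) → Fˣ` is onto with kernel `SL_n(F)`, and the centre `Z` of `SL_n(F)` embeds
in `Fˣ`, we get `|GL_n(F)| / (q - 1)² ≤ |PSL_n(F)| ≤ |GL_n(F)| / (q - 1)`. With `x = q⁻¹`,
`|GL_n(F)| = ∏_{i<n} (qⁿ - qⁱ) = q^(n²) ∏_{j=1}^{n} (1 - xʲ)`, and this product is at most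
`(1 - x)(1 - x²)` (drop the factors with `j ≥ 3`) and, as `x ≤ 1/2`, strictly more than `(1 - x)²`:
`∏_{j=2}^{n} (1 - xʲ) ≥ 1 - ∑_{j=2}^{n} xʲ > 1 - x²/(1 - x) ≥ 1 - x`.
-/

open Finset Matrix

section Counting

variable {ι R : Type*} [Fintype ι] [DecidableEq ι] [Nonempty ι] [CommRing R]

theorem Matrix.card_GL_eq_card_units_mul_card_SL :
    Nat.card (GL ι R) = Nat.card Rˣ * Nat.card (SpecialLinearGroup ι R) := by
  have hrange : SpecialLinearGroup.toGL.range = (GeneralLinearGroup.det : GL ι R →* Rˣ).ker :=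
    SetLike.coe_injective SpecialLinearGroup.range_toGL
  rw [Subgroup.card_eq_card_quotient_mul_card_subgroup GeneralLinearGroup.det.ker,
    Nat.card_congr (QuotientGroup.quotientKerEquivOfSurjective _
      GeneralLinearGroup.det_surjective).toEquiv,
    ← hrange,
    Nat.card_congr (MonoidHom.ofInjective SpecialLinearGroup.toGL_injective).toEquiv.symm]

theorem Matrix.card_center_SL_le_card_units [Finite R] :
    Nat.card (Subgroup.center (SpecialLinearGroup ι R)) ≤ Nat.card Rˣ := by
  rw [Nat.card_congr
    (SpecialLinearGroup.center_equiv_rootsOfUnity' (Classical.arbitrary ι)).toEquiv]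
  exact Subgroup.card_le_card_group _

theorem Matrix.cast_card_GL_field {S : Type*} [CommRing S] (F : Type*) [Field F] [Fintype F]
    (n : ℕ) : (Nat.card (GL (Fin n) F) : S) =
      ∏ i ∈ range n, ((Fintype.card F : S) ^ n - (Fintype.card F : S) ^ i) := by
  rw [card_GL_field, Nat.cast_prod, Fin.prod_univ_eq_prod_range
    (fun i => ((Fintype.card F ^ n - Fintype.card F ^ i : ℕ) : S))]
  refine prod_congr rfl fun i hi => ?_
  rw [Nat.cast_sub (Nat.pow_le_pow_right Fintype.card_pos (mem_range.1 hi).le)]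
  push_cast; rfl

end Counting

section Products

theorem one_sub_sum_le_prod_one_sub {ι R : Type*} [LinearOrder ι] [CommRing R] [PartialOrder R]
    [IsOrderedRing R] (s : Finset ι) (f : ι → R) (h0 : ∀ i ∈ s, 0 ≤ f i)
    (h1 : ∀ i ∈ s, f i ≤ 1) : 1 - ∑ i ∈ s, f i ≤ ∏ i ∈ s, (1 - f i) := by
  rw [prod_one_sub_ordered]
  refine sub_le_sub_left (sum_le_sum fun i hi => ?_) 1
  refine mul_le_of_le_one_right (h0 i hi) (prod_le_one (fun j hj => ?_) (fun j hj => ?_))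
  · exact sub_nonneg.2 (h1 j (filter_subset _ _ hj))
  · exact sub_le_self _ (h0 j (filter_subset _ _ hj))

variable {K : Type*} [Field K] [LinearOrder K] [IsStrictOrderedRing K] {x : K}

theorem sum_range_pow_add_two_lt (hx0 : 0 < x) (hx : x ≤ 1 / 2) (k : ℕ) :
    ∑ j ∈ range k, x ^ (j + 2) < x := by
  have hxS : x * ∑ j ∈ range k, x ^ j < 1 :=
    calc x * ∑ j ∈ range k, x ^ j ≤ (1 - x) * ∑ j ∈ range k, x ^ j := by
          gcongr
          linarith
      _ = 1 - x ^ k := mul_neg_geom_sum x k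
      _ < 1 := sub_lt_self 1 (pow_pos hx0 k)
  calc ∑ j ∈ range k, x ^ (j + 2) = x * (x * ∑ j ∈ range k, x ^ j) := by
        simp only [mul_sum, pow_add]; exact sum_congr rfl fun j _ => by ring
    _ < x := mul_lt_of_lt_one_right hx0 hxS

theorem prod_range_one_sub_pow_succ_le (hx0 : 0 ≤ x) (hx1 : x ≤ 1) {n : ℕ} (hn : 2 ≤ n) :
    ∏ j ∈ range n, (1 - x ^ (j + 1)) ≤ (1 - x) * (1 - x ^ 2) := by
  obtain ⟨m, rfl⟩ := Nat.exists_eq_add_of_le hn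
  rw [prod_range_add, prod_range_succ, prod_range_one]
  have htail : ∏ j ∈ range m, (1 - x ^ (2 + j + 1)) ≤ 1 :=
    prod_le_one (fun j _ => sub_nonneg.2 (pow_le_one₀ hx0 hx1))
      (fun j _ => sub_le_self _ (pow_nonneg hx0 _))
  have hhead : 0 ≤ (1 - x ^ (0 + 1)) * (1 - x ^ (1 + 1)) :=
    mul_nonneg (sub_nonneg.2 (pow_le_one₀ hx0 hx1)) (sub_nonneg.2 (pow_le_one₀ hx0 hx1))
  calc _ ≤ (1 - x ^ (0 + 1)) * (1 - x ^ (1 + 1)) := mul_le_of_le_one_right hhead htail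
    _ = (1 - x) * (1 - x ^ 2) := by ring

theorem sq_one_sub_lt_prod_range_one_sub_pow_succ (hx0 : 0 < x) (hx : x ≤ 1 / 2) {n : ℕ}
    (hn : 2 ≤ n) : (1 - x) ^ 2 < ∏ j ∈ range n, (1 - x ^ (j + 1)) := by
  obtain ⟨m, rfl⟩ : ∃ m, n = m + 1 := ⟨n - 1, by omega⟩
  rw [prod_range_succ', zero_add, pow_one, sq, mul_comm]
  have hx1 : x ≤ 1 := by linarith
  have htail : 1 - x < ∏ j ∈ range m, (1 - x ^ (j + 2)) :=
    calc 1 - x < 1 - ∑ j ∈ range m, x ^ (j + 2) := by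
          linarith [sum_range_pow_add_two_lt hx0 hx m]
      _ ≤ _ := one_sub_sum_le_prod_one_sub _ _ (fun j _ => pow_nonneg hx0.le _)
          (fun j _ => pow_le_one₀ hx0.le hx1)
  exact mul_lt_mul_of_pos_right htail (by linarith)

theorem prod_range_pow_sub_pow_eq {r : K} (hr : r ≠ 0) (n : ℕ) :
    ∏ i ∈ range n, (r ^ n - r ^ i) = r ^ (n ^ 2) * ∏ j ∈ range n, (1 - r⁻¹ ^ (j + 1)) := by
  calc ∏ i ∈ range n, (r ^ n - r ^ i) = ∏ i ∈ range n, r ^ n * (1 - r⁻¹ ^ (n - i)) := by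
        refine prod_congr rfl fun i hi => ?_
        rw [inv_pow, pow_sub₀ r hr (mem_range.1 hi).le]
        field_simp
    _ = r ^ (n ^ 2) * ∏ i ∈ range n, (1 - r⁻¹ ^ (n - i)) := by
        rw [prod_mul_distrib, prod_const, card_range, sq, pow_mul]
    _ = r ^ (n ^ 2) * ∏ j ∈ range n, (1 - r⁻¹ ^ (j + 1)) := by
        rw [← prod_range_reflect (fun j => 1 - r⁻¹ ^ (j + 1))]
        refine congrArg _ (prod_congr rfl fun i hi => ?_)
        rw [show n - 1 - i + 1 = n - i by have := mem_range.1 hi; omega]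

theorem sq_sub_one_mul_pow_lt_prod_range_pow_sub_pow {r : K} (hr : 2 ≤ r) {n : ℕ}
    (hn : 2 ≤ n) : (r - 1) ^ 2 * r ^ (n ^ 2 - 2) < ∏ i ∈ range n, (r ^ n - r ^ i) := by
  have hr0 : 0 < r := by linarith
  have hn2 : 2 ≤ n ^ 2 := hn.trans (Nat.le_self_pow two_ne_zero n)
  calc (r - 1) ^ 2 * r ^ (n ^ 2 - 2) = r ^ (n ^ 2) * (1 - r⁻¹) ^ 2 := by
        rw [← pow_sub_mul_pow r hn2]; field_simp
    _ < r ^ (n ^ 2) * ∏ j ∈ range n, (1 - r⁻¹ ^ (j + 1)) := by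
        refine mul_lt_mul_of_pos_left (sq_one_sub_lt_prod_range_one_sub_pow_succ ?_ ?_ hn) ?_
        · positivity
        · rw [one_div]; exact inv_anti₀ two_pos hr
        · positivity
    _ = ∏ i ∈ range n, (r ^ n - r ^ i) := (prod_range_pow_sub_pow_eq hr0.ne' n).symm

theorem prod_range_pow_sub_pow_le {r : K} (hr : 1 ≤ r) {n : ℕ} (hn : 2 ≤ n) :
    ∏ i ∈ range n, (r ^ n - r ^ i) ≤ (r - 1) * ((1 - (r ^ 2)⁻¹) * r ^ (n ^ 2 - 1)) := by
  have hr0 : 0 < r := by linarith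
  have hn1 : 1 ≤ n ^ 2 := Nat.one_le_pow _ _ (by omega)
  calc ∏ i ∈ range n, (r ^ n - r ^ i) = r ^ (n ^ 2) * ∏ j ∈ range n, (1 - r⁻¹ ^ (j + 1)) :=
        prod_range_pow_sub_pow_eq hr0.ne' n
    _ ≤ r ^ (n ^ 2) * ((1 - r⁻¹) * (1 - r⁻¹ ^ 2)) := by
        gcongr
        exact prod_range_one_sub_pow_succ_le (by positivity) (inv_le_one_of_one_le₀ hr) hn
    _ = (r - 1) * ((1 - (r ^ 2)⁻¹) * r ^ (n ^ 2 - 1)) := by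
        rw [← pow_sub_mul_pow r hn1]; field_simp

end Products

/-- Lemma 2.3(i): for a finite field `F` with `q` elements and `n ≥ 2`,
`q^(n²−2) < |PSL_n(F)| ≤ (1 − q⁻²)·q^(n²−1)`. -/
theorem stmt6 (F : Type*) [Field F] [Fintype F] (q n : ℕ) (hq : Fintype.card F = q)
    (hn : 2 ≤ n) :
    (q : ℝ) ^ (n ^ 2 - 2) <
        (Nat.card (Matrix.SpecialLinearGroup (Fin n) F ⧸
          Subgroup.center (Matrix.SpecialLinearGroup (Fin n) F)) : ℝ) ∧
      (Nat.card (Matrix.SpecialLinearGroup (Fin n) F ⧸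
          Subgroup.center (Matrix.SpecialLinearGroup (Fin n) F)) : ℝ) ≤
        (1 - ((q : ℝ) ^ 2)⁻¹) * (q : ℝ) ^ (n ^ 2 - 1) := by
  have : Nonempty (Fin n) := ⟨⟨0, by omega⟩⟩
  set P := Nat.card (SpecialLinearGroup (Fin n) F ⧸ Subgroup.center (SpecialLinearGroup (Fin n) F))
  set Z := Nat.card (Subgroup.center (SpecialLinearGroup (Fin n) F))
  have hq2 : 2 ≤ q := hq ▸ Fintype.one_lt_card
  have hq2' : (2 : ℝ) ≤ q := by exact_mod_cast hq2
  have hunits : (Nat.card Fˣ : ℝ) = q - 1 := by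
    rw [Nat.card_units, Nat.card_eq_fintype_card, hq, Nat.cast_sub (by omega), Nat.cast_one]
  have hGL : ((q : ℝ) - 1) * (P * Z) = ∏ i ∈ range n, ((q : ℝ) ^ n - (q : ℝ) ^ i) := by
    rw [← hunits, ← Nat.cast_mul, ← Nat.cast_mul,
      ← Subgroup.card_eq_card_quotient_mul_card_subgroup, ← card_GL_eq_card_units_mul_card_SL,
      cast_card_GL_field, hq]
  have hZ1 : (1 : ℝ) ≤ Z := Nat.one_le_cast.2 Nat.card_pos
  have hZq : (Z : ℝ) ≤ q - 1 := hunits ▸ Nat.cast_le.2 card_center_SL_le_card_units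
  constructor
  · refine lt_of_mul_lt_mul_left ?_ (sq_nonneg ((q : ℝ) - 1))
    calc ((q : ℝ) - 1) ^ 2 * q ^ (n ^ 2 - 2) < ((q : ℝ) - 1) * (P * Z) :=
          hGL ▸ sq_sub_one_mul_pow_lt_prod_range_pow_sub_pow hq2' hn
      _ ≤ ((q : ℝ) - 1) ^ 2 * P := by
          rw [sq, mul_assoc, mul_comm (P : ℝ)]
          gcongr
          linarith
  · refine le_of_mul_le_mul_left ?_ (by linarith : (0 : ℝ) < q - 1)
    calc ((q : ℝ) - 1) * P ≤ ((q : ℝ) - 1) * (P * Z) := by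
          gcongr
          · linarith
          · exact le_mul_of_one_le_right (by positivity) hZ1
      _ ≤ _ := hGL ▸ prod_range_pow_sub_pow_le (by linarith) hn
end

section
/- Let p be a prime, e a positive integer, q = p^e, let F be a finite field with |F| = q and E a finite field with |E| = q³, and let m ≥ 1. Then 108·e²·|GL_m(E)|³ > (q−1)²·|GL_{3m}(F)| holds if and only if q ∈ {2, 3, 4, 5, 7, 8, 9, 11, 16, 27, 32}. -/
open Finset

lemma keyA (t q : ℕ) (ht : 1 ≤ t) (hq : 2 ≤ q) :
    q^3 * ((t*q-1)*(t*q^2-1)) ≤ (t*q^3-1)^2 := by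
  have h1 : 1 ≤ t*q := Nat.one_le_iff_ne_zero.2 (by positivity)
  have h2 : 1 ≤ t*q^2 := Nat.one_le_iff_ne_zero.2 (by positivity)
  have h3 : 1 ≤ t*q^3 := Nat.one_le_iff_ne_zero.2 (by positivity)
  zify [h1, h2, h3]
  have ht' : (1:ℤ) ≤ t := by exact_mod_cast ht
  have hq' : (2:ℤ) ≤ q := by exact_mod_cast hq
  have hq2 : (4:ℤ) ≤ (q:ℤ)^2 := by nlinarith
  have key : (0:ℤ) ≤ ((t:ℤ)-1) * ((q:ℤ)^3*((q:ℤ)^2+(q:ℤ)-2)) := by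
    apply mul_nonneg (by linarith)
    nlinarith
  nlinarith [key, hq2, hq']

lemma keyB (t q : ℕ) (ht : 1 ≤ t) (hq : 2 ≤ q) :
    (t-1)*(t*q^3-1) ≤ (t*q-1)*(t*q^2-1) := by
  have h1 : 1 ≤ t*q := Nat.one_le_iff_ne_zero.2 (by positivity)
  have h2 : 1 ≤ t*q^2 := Nat.one_le_iff_ne_zero.2 (by positivity)
  have h3 : 1 ≤ t*q^3 := Nat.one_le_iff_ne_zero.2 (by positivity)
  zify [h1, h2, h3, ht]
  have ht' : (1:ℤ) ≤ t := by exact_mod_cast ht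
  have hq' : (2:ℤ) ≤ q := by exact_mod_cast hq
  nlinarith [mul_nonneg (show (0:ℤ) ≤ t by linarith)
    (mul_nonneg (sq_nonneg ((q:ℤ) - 1)) (show (0:ℤ) ≤ (q:ℤ)+1 by linarith))]

def PP (q m : ℕ) : ℕ := ∏ i ∈ range m, (q^(3*(i+1)) - 1)
def PA (q n : ℕ) : ℕ := ∏ i ∈ range n, (q^(i+1) - 1)

lemma PPsucc (q m : ℕ) : PP q (m+1) = PP q m * (q^(3*m+3) - 1) := by
  rw [PP, PP, Finset.prod_range_succ]
  congr 2

lemma PAsucc3 (q m : ℕ) : PA q (3*(m+1)) =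
    PA q (3*m) * ((q^(3*m+1) - 1) * ((q^(3*m+2) - 1) * (q^(3*m+3) - 1))) := by
  have h : 3*(m+1) = (3*m) + 1 + 1 + 1 := by ring
  rw [PA, PA, h, Finset.prod_range_succ, Finset.prod_range_succ, Finset.prod_range_succ]
  ring_nf

lemma dirA (q C : ℕ) (hq : 2 ≤ q)
    (hbase : (q-1)^2 * (q^(3*1) * PA q (3*1)) < C * (PP q 1)^3) :
    ∀ m, 1 ≤ m → (q-1)^2 * (q^(3*m) * PA q (3*m)) < C * (PP q m)^3 := by
  intro m hm
  induction m with
  | zero => omega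
  | succ n ih =>
    rcases Nat.eq_zero_or_pos n with rfl | hn
    · exact hbase
    · have IH := ih hn
      have ht : 1 ≤ q^(3*n) := Nat.one_le_iff_ne_zero.2 (by positivity)
      have hD1 : 1 < q^(3*n+3) := Nat.one_lt_pow (by omega) (by omega)
      have hD : 0 < q^(3*n+3) - 1 := by omega
      have e1 : q^(3*n+1) = q^(3*n) * q := by rw [pow_succ]
      have e2 : q^(3*n+2) = q^(3*n) * q^2 := by rw [pow_add]
      have e3 : q^(3*n+3) = q^(3*n) * q^3 := by rw [pow_add]
      have hAB : q^(3*n+3) * ((q^(3*n+1)-1) * (q^(3*n+2)-1))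
          ≤ q^(3*n) * (q^(3*n+3)-1)^2 := by
        have := keyA (q^(3*n)) q ht hq
        calc q^(3*n+3) * ((q^(3*n+1)-1) * (q^(3*n+2)-1))
            = q^(3*n) * (q^3 * ((q^(3*n)*q-1) * (q^(3*n)*q^2-1))) := by
              rw [e1, e2, e3]; ring
          _ ≤ q^(3*n) * (q^(3*n)*q^3-1)^2 := Nat.mul_le_mul_left _ this
          _ = q^(3*n) * (q^(3*n+3)-1)^2 := by rw [e3]
      have h3 : 3*(n+1) = 3*n+3 := by ring
      rw [PPsucc, PAsucc3, h3]
      calc (q-1)^2 * (q^(3*n+3) * (PA q (3*n) *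
              ((q^(3*n+1)-1) * ((q^(3*n+2)-1) * (q^(3*n+3)-1)))))
          = ((q-1)^2 * PA q (3*n) * (q^(3*n+3)-1)) *
              (q^(3*n+3) * ((q^(3*n+1)-1) * (q^(3*n+2)-1))) := by ring
        _ ≤ ((q-1)^2 * PA q (3*n) * (q^(3*n+3)-1)) *
              (q^(3*n) * (q^(3*n+3)-1)^2) := Nat.mul_le_mul_left _ hAB
        _ = ((q-1)^2 * (q^(3*n) * PA q (3*n))) * ((q^(3*n+3)-1))^3 := by ring
        _ < (C * (PP q n)^3) * ((q^(3*n+3)-1))^3 := by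
              exact Nat.mul_lt_mul_of_lt_of_le IH (le_refl _) (by positivity)
        _ = C * (PP q n * (q^(3*n+3)-1))^3 := by ring

lemma dirB (q C : ℕ) (hq : 2 ≤ q)
    (hbase : C * (PP q 1)^3 ≤ (q-1)^2 * (PA q (3*1) * (q^(3*1) - 1))) :
    ∀ m, 1 ≤ m → C * (PP q m)^3 ≤ (q-1)^2 * (PA q (3*m) * (q^(3*m) - 1)) := by
  intro m hm
  induction m with
  | zero => omega
  | succ n ih =>
    rcases Nat.eq_zero_or_pos n with rfl | hn
    · exact hbase
    · have IH := ih hn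
      have ht : 1 ≤ q^(3*n) := Nat.one_le_iff_ne_zero.2 (by positivity)
      have e1 : q^(3*n+1) = q^(3*n) * q := by rw [pow_succ]
      have e2 : q^(3*n+2) = q^(3*n) * q^2 := by rw [pow_add]
      have e3 : q^(3*n+3) = q^(3*n) * q^3 := by rw [pow_add]
      have hKB : (q^(3*n)-1) * (q^(3*n+3)-1)
          ≤ (q^(3*n+1)-1) * (q^(3*n+2)-1) := by
        have := keyB (q^(3*n)) q ht hq
        rw [e1, e2, e3]; exact this
      have h3 : 3*(n+1) = 3*n+3 := by ring
      rw [PPsucc, PAsucc3, h3]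
      calc C * (PP q n * (q^(3*n+3)-1))^3
          = (C * (PP q n)^3) * (q^(3*n+3)-1)^3 := by ring
        _ ≤ ((q-1)^2 * (PA q (3*n) * (q^(3*n)-1))) * (q^(3*n+3)-1)^3 :=
              Nat.mul_le_mul_right _ IH
        _ = ((q-1)^2 * PA q (3*n) * (q^(3*n+3)-1)^2) *
              ((q^(3*n)-1) * (q^(3*n+3)-1)) := by ring
        _ ≤ ((q-1)^2 * PA q (3*n) * (q^(3*n+3)-1)^2) *
              ((q^(3*n+1)-1) * (q^(3*n+2)-1)) := Nat.mul_le_mul_left _ hKB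
        _ = (q-1)^2 * (PA q (3*n) *
              ((q^(3*n+1)-1) * ((q^(3*n+2)-1) * (q^(3*n+3)-1))) * (q^(3*n+3)-1)) := by ring

lemma e7pow : ∀ e, 7 ≤ e → 216 * e^2 ≤ 4^e := by
  intro e he
  induction e with
  | zero => omega
  | succ n ih =>
    rcases Nat.lt_or_ge n 7 with h | h
    · have hn : n = 6 := by omega
      subst hn; norm_num
    · have h1 := ih (by omega)
      calc 216*(n+1)^2 ≤ 4*(216*n^2) := by nlinarith
        _ ≤ 4*4^n := by omega
        _ = 4^(n+1) := by rw [pow_succ]; ring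

lemma core (p e q : ℕ) (hp2 : 2 ≤ p) (he : 1 ≤ e) (hq : q = p^e)
    (h13 : 13 ≤ q) (h16 : q ≠ 16) (h27 : q ≠ 27) (h32 : q ≠ 32) :
    108 * e^2 * (q^3 - 1) ≤ (q-1)^3 * (q^2 - 1) := by
  have hq1 : 1 ≤ q := by omega
  have hq2 : 1 ≤ q^2 := Nat.one_le_iff_ne_zero.2 (by positivity)
  have hq3 : 1 ≤ q^3 := Nat.one_le_iff_ne_zero.2 (by positivity)
  by_cases he7 : 7 ≤ e
  · -- large e
    have h4 : 216*e^2 ≤ 4^e := e7pow e he7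
    have h2e : 2^e ≤ q := hq ▸ Nat.pow_le_pow_left hp2 e
    have hqbig : 128 ≤ q := le_trans (by calc (128:ℕ) = 2^7 := by norm_num
      _ ≤ 2^e := Nat.pow_le_pow_right (by norm_num) he7) h2e
    have hq2e : 216*e^2 ≤ q^2 := by
      calc 216*e^2 ≤ 4^e := h4
        _ = (2^e)^2 := by rw [show (4:ℕ) = 2^2 by norm_num, ← pow_mul, mul_comm, pow_mul]
        _ ≤ q^2 := Nat.pow_le_pow_left h2e 2
    have key : 2*((q-1)^3*(q^2-1)) ≥ q^5 := by
      zify [hq1, hq2]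
      have hr : (0:ℤ) ≤ (q:ℤ) - 128 := by
        have : (128:ℤ) ≤ q := by exact_mod_cast hqbig
        linarith
      nlinarith [hr, mul_nonneg hr hr, mul_nonneg (mul_nonneg hr hr) hr,
        mul_nonneg (mul_nonneg (mul_nonneg hr hr) hr) hr,
        mul_nonneg (mul_nonneg (mul_nonneg (mul_nonneg hr hr) hr) hr) hr]
    have : 2*(108*e^2*(q^3-1)) ≤ 2*((q-1)^3*(q^2-1)) := by
      calc 2*(108*e^2*(q^3-1)) = (216*e^2)*(q^3-1) := by ring
        _ ≤ q^2*(q^3-1) := Nat.mul_le_mul_right _ hq2e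
        _ ≤ q^2*q^3 := Nat.mul_le_mul_left _ (Nat.sub_le _ _)
        _ = q^5 := by ring
        _ ≤ 2*((q-1)^3*(q^2-1)) := key
    omega
  · -- e ≤ 6
    push_neg at he7
    have main : ∀ (B : ℕ), B ≤ q → 108*e^2 ≤ B → True := fun _ _ _ => trivial
    interval_cases e
    · -- e = 1, q = p ≥ 13
      zify [hq1, hq2, hq3]
      have hr : (0:ℤ) ≤ (q:ℤ) - 13 := by
        have : (13:ℤ) ≤ q := by exact_mod_cast h13
        linarith
      nlinarith [hr, mul_nonneg hr hr, mul_nonneg (mul_nonneg hr hr) hr,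
        mul_nonneg (mul_nonneg (mul_nonneg hr hr) hr) hr,
        mul_nonneg (mul_nonneg (mul_nonneg (mul_nonneg hr hr) hr) hr) hr]
    · -- e = 2, q = p^2, p ≥ 5 so q ≥ 25
      have hp5 : 5 ≤ p := by
        by_contra h
        push_neg at h
        interval_cases p <;> norm_num at hq <;> omega
      have hq25 : 25 ≤ q := by
        calc (25:ℕ) = 5^2 := by norm_num
          _ ≤ p^2 := Nat.pow_le_pow_left hp5 2
          _ = q := hq.symm
      zify [hq1, hq2, hq3]
      have hr : (0:ℤ) ≤ (q:ℤ) - 25 := by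
        have : (25:ℤ) ≤ q := by exact_mod_cast hq25
        linarith
      nlinarith [hr, mul_nonneg hr hr, mul_nonneg (mul_nonneg hr hr) hr,
        mul_nonneg (mul_nonneg (mul_nonneg hr hr) hr) hr,
        mul_nonneg (mul_nonneg (mul_nonneg (mul_nonneg hr hr) hr) hr) hr]
    · -- e = 3, p ≥ 4 so q ≥ 64
      have hp4 : 4 ≤ p := by
        by_contra h
        push_neg at h
        interval_cases p <;> norm_num at hq <;> omega
      have hq64 : 64 ≤ q := by
        calc (64:ℕ) = 4^3 := by norm_num
          _ ≤ p^3 := Nat.pow_le_pow_left hp4 3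
          _ = q := hq.symm
      zify [hq1, hq2, hq3]
      have hr : (0:ℤ) ≤ (q:ℤ) - 64 := by
        have : (64:ℤ) ≤ q := by exact_mod_cast hq64
        linarith
      nlinarith [hr, mul_nonneg hr hr, mul_nonneg (mul_nonneg hr hr) hr,
        mul_nonneg (mul_nonneg (mul_nonneg hr hr) hr) hr,
        mul_nonneg (mul_nonneg (mul_nonneg (mul_nonneg hr hr) hr) hr) hr]
    · -- e = 4, p ≥ 3 so q ≥ 81
      have hp3 : 3 ≤ p := by
        by_contra h
        push_neg at h
        interval_cases p <;> norm_num at hq <;> omega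
      have hq81 : 81 ≤ q := by
        calc (81:ℕ) = 3^4 := by norm_num
          _ ≤ p^4 := Nat.pow_le_pow_left hp3 4
          _ = q := hq.symm
      zify [hq1, hq2, hq3]
      have hr : (0:ℤ) ≤ (q:ℤ) - 81 := by
        have : (81:ℤ) ≤ q := by exact_mod_cast hq81
        linarith
      nlinarith [hr, mul_nonneg hr hr, mul_nonneg (mul_nonneg hr hr) hr,
        mul_nonneg (mul_nonneg (mul_nonneg hr hr) hr) hr,
        mul_nonneg (mul_nonneg (mul_nonneg (mul_nonneg hr hr) hr) hr) hr]
    · -- e = 5, p ≥ 3 so q ≥ 243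
      have hp3 : 3 ≤ p := by
        by_contra h
        push_neg at h
        interval_cases p <;> norm_num at hq <;> omega
      have hq243 : 243 ≤ q := by
        calc (243:ℕ) = 3^5 := by norm_num
          _ ≤ p^5 := Nat.pow_le_pow_left hp3 5
          _ = q := hq.symm
      zify [hq1, hq2, hq3]
      have hr : (0:ℤ) ≤ (q:ℤ) - 243 := by
        have : (243:ℤ) ≤ q := by exact_mod_cast hq243
        linarith
      nlinarith [hr, mul_nonneg hr hr, mul_nonneg (mul_nonneg hr hr) hr,
        mul_nonneg (mul_nonneg (mul_nonneg hr hr) hr) hr,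
        mul_nonneg (mul_nonneg (mul_nonneg (mul_nonneg hr hr) hr) hr) hr]
    · -- e = 6, q ≥ 64
      have hq64 : 64 ≤ q := by
        calc (64:ℕ) = 2^6 := by norm_num
          _ ≤ p^6 := Nat.pow_le_pow_left hp2 6
          _ = q := hq.symm
      zify [hq1, hq2, hq3]
      have hr : (0:ℤ) ≤ (q:ℤ) - 64 := by
        have : (64:ℤ) ≤ q := by exact_mod_cast hq64
        linarith
      nlinarith [hr, mul_nonneg hr hr, mul_nonneg (mul_nonneg hr hr) hr,
        mul_nonneg (mul_nonneg (mul_nonneg hr hr) hr) hr,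
        mul_nonneg (mul_nonneg (mul_nonneg (mul_nonneg hr hr) hr) hr) hr]

lemma cardGL (K : Type*) [Field K] [Fintype K] (n : ℕ) :
    Nat.card (Matrix.GeneralLinearGroup (Fin n) K) =
      ∏ i ∈ range n, (Fintype.card K ^ n - Fintype.card K ^ i) := by
  rw [Matrix.card_GL_field,
    Fin.prod_univ_eq_prod_range (fun i => Fintype.card K ^ n - Fintype.card K ^ i) n]

lemma prod_factor (c n : ℕ) :
    ∏ i ∈ range n, (c ^ n - c ^ i) =
      c ^ (∑ i ∈ range n, i) * ∏ i ∈ range n, (c ^ (i + 1) - 1) := by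
  calc ∏ i ∈ range n, (c ^ n - c ^ i)
      = ∏ i ∈ range n, (c ^ i * (c ^ (n - i) - 1)) := by
        apply Finset.prod_congr rfl
        intro i hi
        rw [Finset.mem_range] at hi
        have h2 : n = i + (n - i) := by omega
        rw [Nat.mul_sub, mul_one, ← pow_add, ← h2]
    _ = (∏ i ∈ range n, c ^ i) * ∏ i ∈ range n, (c ^ (n - i) - 1) :=
        Finset.prod_mul_distrib
    _ = c ^ (∑ i ∈ range n, i) * ∏ i ∈ range n, (c ^ (i + 1) - 1) := by
        rw [Finset.prod_pow_eq_pow_sum]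
        congr 1
        rw [← Finset.prod_range_reflect (fun i => c ^ (i + 1) - 1) n]
        apply Finset.prod_congr rfl
        intro i hi
        rw [Finset.mem_range] at hi
        have : n - 1 - i + 1 = n - i := by omega
        rw [this]

lemma PP1 (q : ℕ) : PP q 1 = q^3 - 1 := by simp [PP]

lemma PA3 (q : ℕ) : PA q 3 = (q - 1) * ((q^2 - 1) * (q^3 - 1)) := by
  simp [PA, Finset.prod_range_succ, mul_assoc]

set_option maxHeartbeats 1000000 in
lemma baseA (p e q : ℕ) (hp : p.Prime) (he : 1 ≤ e) (hq : q = p^e)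
    (hS : q = 2 ∨ q = 3 ∨ q = 4 ∨ q = 5 ∨ q = 7 ∨ q = 8 ∨ q = 9 ∨ q = 11 ∨ q = 16 ∨ q = 27 ∨ q = 32) :
    (q-1)^2 * (q^3 * ((q-1)*((q^2-1)*(q^3-1)))) < 108*e^2 * (q^3-1)^3 := by
  have hp2 := hp.two_le
  have hq32 : q ≤ 32 := by omega
  have hple : p ≤ 32 := le_trans (Nat.le_self_pow (by omega) p) (hq ▸ hq32)
  have he5 : e ≤ 5 := by
    by_contra h
    push_neg at h
    have h1 : 2^6 ≤ 2^e := Nat.pow_le_pow_right (by norm_num) (by omega)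
    have h2 : 2^e ≤ p^e := Nat.pow_le_pow_left hp2 e
    omega
  interval_cases e <;> interval_cases p <;> subst hq <;>
    first
      | (norm_num at hS; done)
      | (exfalso; revert hp; norm_num; done)
      | norm_num

/-- Largeness condition for a `C₃`-subgroup of type `GL_{n/3}(q³)` in `PSL_{3m}(q)`:
`108·e²·|GL_m(E)|³ > (q−1)²·|GL_{3m}(F)|` (with `|E| = q³`, `|F| = q`) iff `q` lies in the
listed set. -/
theorem stmt10 (p e : ℕ) (hp : p.Prime) (he : 1 ≤ e) (q : ℕ) (hq : q = p ^ e)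
    (F : Type*) [Field F] [Fintype F] (hF : Fintype.card F = q)
    (E : Type*) [Field E] [Fintype E] (hE : Fintype.card E = q ^ 3) (m : ℕ) (hm : 1 ≤ m) :
    108 * e ^ 2 * (Nat.card (Matrix.GeneralLinearGroup (Fin m) E)) ^ 3 >
        (q - 1) ^ 2 * Nat.card (Matrix.GeneralLinearGroup (Fin (3 * m)) F) ↔
      q ∈ ({2, 3, 4, 5, 7, 8, 9, 11, 16, 27, 32} : Set ℕ) := by
  have hp2 : 2 ≤ p := hp.two_le
  have hq2 : 2 ≤ q := by
    rw [hq]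
    calc (2:ℕ) = 2^1 := by norm_num
      _ ≤ 2^e := Nat.pow_le_pow_right (by norm_num) he
      _ ≤ p^e := Nat.pow_le_pow_left hp2 e
  simp only [Set.mem_insert_iff, Set.mem_singleton_iff]
  rw [cardGL E m, cardGL F (3*m), hE, hF, prod_factor, prod_factor]
  have hPP : (∏ i ∈ range m, ((q^3)^(i+1) - 1)) = PP q m := by
    unfold PP
    apply Finset.prod_congr rfl
    intro i _
    rw [← pow_mul]
  have hsum : (∑ i ∈ range (3*m), i) = 9*(∑ i ∈ range m, i) + 3*m := by
    have h1 := Finset.sum_range_id_mul_two m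
    have h2 := Finset.sum_range_id_mul_two (3*m)
    have h3 : (3*m) * ((3*m) - 1) = 9*(m*(m-1)) + 6*m := by
      cases m with
      | zero => simp
      | succ n =>
        have e1 : 3*(n+1) - 1 = 3*n+2 := by omega
        have e2 : (n+1) - 1 = n := by omega
        rw [e1, e2]; ring
    rw [h3, ← h1] at h2
    omega
  rw [hPP, hsum]
  set s := ∑ i ∈ range m, i with hs
  have E1 : 108*e^2 * ((q^3)^s * PP q m)^3 = q^(9*s) * (108*e^2*(PP q m)^3) := by
    rw [mul_pow, ← pow_mul, ← pow_mul, show 3*(s*3) = 9*s by ring]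
    ring
  have hPA : (∏ i ∈ range (3*m), (q^(i+1)-1)) = PA q (3*m) := rfl
  rw [hPA]
  have E2 : (q-1)^2 * (q^(9*s+3*m) * PA q (3*m)) = q^(9*s) * ((q-1)^2*(q^(3*m) * PA q (3*m))) := by
    rw [pow_add]; ring
  rw [E1, E2, gt_iff_lt, mul_lt_mul_iff_right₀ (show 0 < q^(9*s) by positivity)]
  constructor
  · intro h
    by_contra hnot
    push_neg at hnot
    obtain ⟨n2, n3, n4, n5, n7, n8, n9, n11, n16, n27, n32⟩ := hnot
    have h13 : 13 ≤ q := by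
      by_contra hlt
      push_neg at hlt
      have hple : p ≤ 12 := by
        have := Nat.le_self_pow (show e ≠ 0 by omega) p
        omega
      have he3 : e ≤ 3 := by
        by_contra h4
        push_neg at h4
        have g1 : 2^4 ≤ 2^e := Nat.pow_le_pow_right (by norm_num) (by omega)
        have g2 : 2^e ≤ p^e := Nat.pow_le_pow_left hp2 e
        omega
      interval_cases e <;> interval_cases p <;> subst hq <;>
        first
          | (exfalso; revert hp; norm_num; done)
          | (norm_num at hlt; done)
          | (revert n2 n3 n4 n5 n7 n8 n9 n11; norm_num; done)
    have hcore := core p e q hp2 he hq h13 n16 n27 n32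
    have hbaseB : 108*e^2 * (PP q 1)^3 ≤ (q-1)^2 * (PA q (3*1) * (q^(3*1) - 1)) := by
      rw [PP1, show 3*1 = 3 by norm_num, PA3]
      calc 108*e^2*(q^3-1)^3 = (108*e^2*(q^3-1)) * (q^3-1)^2 := by ring
        _ ≤ ((q-1)^3*(q^2-1)) * (q^3-1)^2 := Nat.mul_le_mul_right _ hcore
        _ = (q-1)^2 * ((q-1)*((q^2-1)*(q^3-1)) * (q^3-1)) := by ring
    have hB := dirB q (108*e^2) hq2 hbaseB m hm
    have hle : (q-1)^2 * (PA q (3*m) * (q^(3*m) - 1)) ≤ (q-1)^2 * (q^(3*m) * PA q (3*m)) := by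
      apply Nat.mul_le_mul_left
      rw [mul_comm]
      exact Nat.mul_le_mul_right _ (Nat.sub_le _ _)
    exact absurd h (not_lt.2 (le_trans hB hle))
  · intro hS
    apply dirA q (108*e^2) hq2 _ m hm
    have hb := baseA p e q hp he hq hS
    show (q-1)^2 * (q^(3*1) * PA q (3*1)) < 108*e^2 * (PP q 1)^3
    rw [PP1, show 3*1 = 3 by norm_num, PA3]
    exact hb
end
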